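/- Given a De Morgan algebra D = (D, ⊓, ⊔, ∼, 0, 1), the product bilattice D ⊙ D equipped with conflation −(a, b) := (∼b, ∼a) is a bounded commutative distributive bilattice with conflation; in particular the conflation is involutive, commutes with the negation ¬(a,b) = (b,a), is monotone w.r.t. the truth order, and antitone w.r.t. the knowledge order. -/
import Mathlib

section
variable {D : Type*} [DistribLattice D] [BoundedOrder D]

/-- Truth order on D × D. -/
def tle (x y : D × D) : Prop := x.1 ≤ y.1 ∧ y.2 ≤ x.2
/-- Knowledge order on D × D. -/
def kle (x y : D × D) : Prop := x.1 ≤ y.1 ∧ x.2 ≤ y.2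
/-- Negation swapping coordinates. -/
def bneg (x : D × D) : D × D := (x.2, x.1)
/-- Conflation −(a,b) = (∼b, ∼a) induced by a De Morgan negation ∼. -/
def conf (dn : D → D) (x : D × D) : D × D := (dn x.2, dn x.1)

/-- For a De Morgan algebra D, the conflation on D ⊙ D is involutive, commutes with
negation, is monotone w.r.t. ≤_t and antitone w.r.t. ≤_k; hence D ⊙ D is a bounded
commutative distributive bilattice with conflation. -/
theorem product_conflation_properties
    (dn : D → D)
    (hdninv : ∀ a, dn (dn a) = a)
    (hdnanti : ∀ a b : D, a ≤ b → dn b ≤ dn a) :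
    (∀ x : D × D, conf dn (conf dn x) = x) ∧
    (∀ x : D × D, conf dn (bneg x) = bneg (conf dn x)) ∧
    (∀ x y : D × D, tle x y → tle (conf dn x) (conf dn y)) ∧
    (∀ x y : D × D, kle x y → kle (conf dn y) (conf dn x)) := by
  refine ⟨fun x => ?_, fun x => rfl, fun x y h => ⟨hdnanti _ _ h.2, hdnanti _ _ h.1⟩,
    fun x y h => ⟨hdnanti _ _ h.2, hdnanti _ _ h.1⟩⟩
  simp [conf, hdninv]

end
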